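/- arXiv:2508.00111 — 2 statements merged into one kernel-verified Lean document; each statement's English description precedes it below -/
import Mathlib

section
/- If A ∈ H_n (with n ≥ 1) has rank one, then F_A = (per(A)/n)·E, where E is the n×n matrix all of whose entries equal 1. -/
/-!
A rank-one matrix is an outer product `u wᵀ`, and every submatrix of it is again one. Every
permutation contributes the same product to the permanent of an outer product, so
`per (u wᵀ) = m! ∏ u ∏ w`. Hence `a i j * per A(i,j) = n! ∏ u ∏ w` for every `i, j`, which is
`per A / (n + 1)`.
-/

open Matrix Finset
open scoped ComplexOrder

/-- `F_A`, with entries `f i j = A i j * per (A(i,j))`, where `A(i,j)` is obtained from `A` by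
deleting the `i`-th row and the `j`-th column. -/
noncomputable def Fmat {n : ℕ} (A : Matrix (Fin (n + 1)) (Fin (n + 1)) ℂ) :
    Matrix (Fin (n + 1)) (Fin (n + 1)) ℂ :=
  Matrix.of fun i j => A i j * (A.submatrix i.succAbove j.succAbove).permanent

namespace Matrix

theorem exists_eq_vecMulVec_of_rank_le_one {m n K : Type*} [Field K] [Fintype n]
    (A : Matrix m n K) (h : A.rank ≤ 1) : ∃ u : m → K, ∃ w : n → K, A = vecMulVec u w := by
  classical
  obtain ⟨v, hv⟩ := finrank_le_one_iff.mp h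
  choose c hc using fun j => hv ⟨A.col j, A.mulVec_single_one j ▸ LinearMap.mem_range_self _ _⟩
  refine ⟨v, c, ext fun i j => ?_⟩
  have hcol := congrArg (fun x : LinearMap.range A.mulVecLin => (x : m → K) i) (hc j)
  simpa [vecMulVec_apply, mul_comm] using hcol.symm

theorem submatrix_vecMulVec {l m n o α : Type*} [Mul α] (u : m → α) (w : n → α) (f : l → m)
    (g : o → n) : (vecMulVec u w).submatrix f g = vecMulVec (u ∘ f) (w ∘ g) :=
  rfl

theorem permanent_vecMulVec {n R : Type*} [DecidableEq n] [Fintype n] [CommSemiring R]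
    (u w : n → R) :
    (vecMulVec u w).permanent = (Fintype.card n).factorial * ((∏ i, u i) * ∏ i, w i) := by
  have hσ (σ : Equiv.Perm n) : ∏ i, vecMulVec u w (σ i) i = (∏ i, u i) * ∏ i, w i := by
    simp only [vecMulVec_apply, prod_mul_distrib, Equiv.prod_comp σ u]
  rw [permanent, Fintype.sum_congr _ _ hσ, sum_const, card_univ, Fintype.card_perm, nsmul_eq_mul]

end Matrix

theorem Fmat_vecMulVec {n : ℕ} (u w : Fin (n + 1) → ℂ) :
    Fmat (vecMulVec u w) = of fun _ _ => n.factorial * ((∏ i, u i) * ∏ i, w i) := by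
  ext i j
  rw [Fmat, of_apply, of_apply, submatrix_vecMulVec, permanent_vecMulVec, vecMulVec_apply,
    Fin.prod_univ_succAbove u i, Fin.prod_univ_succAbove w j, Fintype.card_fin]
  simp only [Function.comp_apply]
  ring

theorem stmt6_general {n : ℕ} (A : Matrix (Fin (n + 1)) (Fin (n + 1)) ℂ)
    (hrank : A.rank = 1) :
    Fmat A = Matrix.of fun _ _ => A.permanent / ((n : ℂ) + 1) := by
  obtain ⟨u, w, rfl⟩ := A.exists_eq_vecMulVec_of_rank_le_one hrank.le
  rw [Fmat_vecMulVec, permanent_vecMulVec, Fintype.card_fin, Nat.factorial_succ]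
  ext
  push_cast
  field_simp

/-- If `A` is a rank-one positive semidefinite Hermitian matrix of size
`(n+1) × (n+1)`, then `F_A = (per(A)/(n+1)) · E`, where `E` is the all-ones matrix. -/
theorem stmt6 {n : ℕ} (A : Matrix (Fin (n + 1)) (Fin (n + 1)) ℂ) (hA : A.PosSemidef)
    (hrank : A.rank = 1) :
    Fmat A = Matrix.of fun _ _ => A.permanent / ((n : ℂ) + 1) :=
  stmt6_general A hrank
end

section
/- If A ∈ H_n (with n ≥ 1) has all entries nonnegative real numbers (a_{i,j} ≥ 0 for all i, j), then for every vector v ∈ ℂ^n one has v*F_A v ≤ per(A)·‖v‖₂²; equivalently, the largest eigenvalue of the Hermitian matrix F_A is at most per(A). -/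
/-!
The entries `a i j * per A(i,j)` of `F_A` are nonnegative reals, and by Laplace expansion of the
permanent along row `i` (resp. column `j`) every row and every column of `F_A` sums to `per A`.
The bound is then Schur's test, via
`Re (conj (v i) * v j) ≤ ‖v i‖ * ‖v j‖ ≤ (‖v i‖² + ‖v j‖²) / 2`.
-/

open Matrix Finset
open scoped ComplexOrder

namespace Matrix

variable {R : Type*} [CommSemiring R]

theorem permanent_succ_column_zero {n : ℕ} (A : Matrix (Fin n.succ) (Fin n.succ) R) :
    A.permanent = ∑ i : Fin n.succ, A i 0 * (A.submatrix i.succAbove Fin.succ).permanent := by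
  rw [permanent, univ_perm_fin_succ, ← univ_product_univ]
  simp only [sum_map, Equiv.toEmbedding_apply, sum_product, submatrix]
  refine sum_congr rfl fun i _ => Fin.cases ?_ (fun i => ?_) i
  · simp [Fin.prod_univ_succ, permanent, mul_sum]
  · rw [← permanent_permute_cols i.cycleRange, permanent, mul_sum]
    refine sum_congr rfl fun σ _ => ?_
    simp only [Fin.prod_univ_succ, Equiv.Perm.decomposeFin_symm_apply_zero,
      Equiv.Perm.decomposeFin_symm_apply_succ, submatrix_apply, Fin.succAbove_cycleRange,
      of_apply, id_eq]

theorem permanent_succ_row_zero {n : ℕ} (A : Matrix (Fin n.succ) (Fin n.succ) R) :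
    A.permanent = ∑ j : Fin n.succ, A 0 j * (A.submatrix Fin.succ j.succAbove).permanent := by
  rw [← permanent_transpose A, permanent_succ_column_zero]
  refine sum_congr rfl fun j _ => ?_
  rw [← permanent_transpose]
  simp [transpose_submatrix]

theorem permanent_succ_row {n : ℕ} (A : Matrix (Fin n.succ) (Fin n.succ) R) (i : Fin n.succ) :
    A.permanent = ∑ j : Fin n.succ, A i j * (A.submatrix i.succAbove j.succAbove).permanent := by
  rw [← permanent_permute_cols i.cycleRange⁻¹ A, permanent_succ_row_zero]
  refine sum_congr rfl fun j _ => ?_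
  simp [submatrix_submatrix, Function.comp_def, Equiv.Perm.inv_def, Fin.cycleRange_symm_zero,
    Fin.cycleRange_symm_succ]

theorem permanent_succ_column {n : ℕ} (A : Matrix (Fin n.succ) (Fin n.succ) R) (j : Fin n.succ) :
    A.permanent = ∑ i : Fin n.succ, A i j * (A.submatrix i.succAbove j.succAbove).permanent := by
  rw [← permanent_transpose A, permanent_succ_row Aᵀ j]
  refine sum_congr rfl fun i _ => ?_
  rw [← permanent_transpose]
  simp [transpose_submatrix]

theorem permanent_nonneg [PartialOrder R] [IsOrderedRing R] {m : Type*} [DecidableEq m] [Fintype m]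
    {M : Matrix m m R} (h : ∀ i j, 0 ≤ M i j) : 0 ≤ M.permanent :=
  sum_nonneg fun _ _ => prod_nonneg fun _ _ => h _ _

end Matrix

theorem RingHom.map_permanent {R S : Type*} [CommSemiring R] [CommSemiring S] (f : R →+* S)
    {m : Type*} [DecidableEq m] [Fintype m] (M : Matrix m m R) :
    f M.permanent = (f.mapMatrix M).permanent := by
  simp [Matrix.permanent, map_sum, map_prod]

section SchurTest

variable {ι : Type*} [Fintype ι] {G : Matrix ι ι ℝ} {c : ℝ}

theorem sum_sum_mul_mul_le_of_row_col_sum_le (hG : ∀ i j, 0 ≤ G i j)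
    (hrow : ∀ i, ∑ j, G i j ≤ c) (hcol : ∀ j, ∑ i, G i j ≤ c) (x : ι → ℝ) :
    ∑ i, ∑ j, G i j * (x i * x j) ≤ c * ∑ i, x i ^ 2 := by
  have hrow' : ∑ i, ∑ j, G i j * x i ^ 2 ≤ c * ∑ i, x i ^ 2 := by
    rw [mul_sum]
    refine sum_le_sum fun i _ => ?_
    rw [← sum_mul]
    exact mul_le_mul_of_nonneg_right (hrow i) (sq_nonneg _)
  have hcol' : ∑ i, ∑ j, G i j * x j ^ 2 ≤ c * ∑ i, x i ^ 2 := by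
    rw [sum_comm, mul_sum]
    refine sum_le_sum fun j _ => ?_
    rw [← sum_mul]
    exact mul_le_mul_of_nonneg_right (hcol j) (sq_nonneg _)
  calc ∑ i, ∑ j, G i j * (x i * x j)
      ≤ ∑ i, ∑ j, (G i j * x i ^ 2 + G i j * x j ^ 2) / 2 := by
        gcongr with i _ j _
        nlinarith [mul_nonneg (hG i j) (sq_nonneg (x i - x j))]
    _ ≤ c * ∑ i, x i ^ 2 := by
        simp only [← sum_div, sum_add_distrib]
        linarith

theorem re_sum_sum_star_mul_ofReal_mul_le_of_row_col_sum_le (hG : ∀ i j, 0 ≤ G i j)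
    (hrow : ∀ i, ∑ j, G i j ≤ c) (hcol : ∀ j, ∑ i, G i j ≤ c) (v : ι → ℂ) :
    (∑ i, ∑ j, star (v i) * (G i j : ℂ) * v j).re ≤ c * ∑ i, ‖v i‖ ^ 2 :=
  calc (∑ i, ∑ j, star (v i) * (G i j : ℂ) * v j).re
      = ∑ i, ∑ j, G i j * (star (v i) * v j).re := by
        simp only [Complex.re_sum, mul_comm _ (G _ _ : ℂ), mul_assoc, Complex.re_ofReal_mul]
    _ ≤ ∑ i, ∑ j, G i j * (‖v i‖ * ‖v j‖) := by
        gcongr with i _ j _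
        · exact hG i j
        · calc (star (v i) * v j).re ≤ ‖star (v i) * v j‖ := Complex.re_le_norm _
            _ = ‖v i‖ * ‖v j‖ := by rw [norm_mul, norm_star]
    _ ≤ c * ∑ i, ‖v i‖ ^ 2 := sum_sum_mul_mul_le_of_row_col_sum_le hG hrow hcol _

end SchurTest

theorem Complex.permanent_map_ofReal {m : Type*} [DecidableEq m] [Fintype m]
    (B : Matrix m m ℝ) : (B.map Complex.ofReal).permanent = B.permanent :=
  (Complex.ofRealHom.map_permanent B).symm

theorem Fmat_map_ofReal {n : ℕ} (B : Matrix (Fin (n + 1)) (Fin (n + 1)) ℝ) (i j : Fin (n + 1)) :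
    Fmat (B.map Complex.ofReal) i j =
      ((B i j * (B.submatrix i.succAbove j.succAbove).permanent : ℝ) : ℂ) := by
  rw [Fmat, of_apply, submatrix_map, Complex.permanent_map_ofReal, map_apply, Complex.ofReal_mul]

theorem stmt8_general {n : ℕ} (A : Matrix (Fin (n + 1)) (Fin (n + 1)) ℂ)
    (hAnonneg : ∀ i j, (A i j).im = 0 ∧ 0 ≤ (A i j).re) :
    ∀ v : Fin (n + 1) → ℂ,
      (∑ i, ∑ j, (starRingEnd ℂ) (v i) * Fmat A i j * v j).re ≤
        A.permanent.re * ∑ i, ‖v i‖ ^ 2 := by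
  intro v
  set B : Matrix (Fin (n + 1)) (Fin (n + 1)) ℝ := A.map Complex.re
  have hB : ∀ i j, 0 ≤ B i j := fun i j => (hAnonneg i j).2
  have hAB : A = B.map Complex.ofReal := by
    ext i j
    exact Complex.ext rfl (hAnonneg i j).1
  rw [hAB, Complex.permanent_map_ofReal, Complex.ofReal_re]
  simp only [Fmat_map_ofReal]
  exact re_sum_sum_star_mul_ofReal_mul_le_of_row_col_sum_le
    (fun i j => mul_nonneg (hB i j) (permanent_nonneg fun _ _ => hB _ _))
    (fun i => (permanent_succ_row B i).ge) (fun j => (permanent_succ_column B j).ge) v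

/-- If `A` is positive semidefinite Hermitian with all entries nonnegative reals,
then `v* F_A v ≤ per(A) · ‖v‖₂²` for every vector `v`, i.e. `λ_max(F_A) ≤ per(A)`. -/
theorem stmt8 {n : ℕ} (A : Matrix (Fin (n + 1)) (Fin (n + 1)) ℂ) (hA : A.PosSemidef)
    (hAnonneg : ∀ i j, (A i j).im = 0 ∧ 0 ≤ (A i j).re) :
    ∀ v : Fin (n + 1) → ℂ,
      (∑ i, ∑ j, (starRingEnd ℂ) (v i) * Fmat A i j * v j).re ≤
        A.permanent.re * ∑ i, ‖v i‖ ^ 2 :=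
  stmt8_general A hAnonneg
end
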